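/- arXiv:math/0603319 — 4 statements merged into one kernel-verified Lean document; each statement's English description precedes it below -/
import Mathlib

section
/- Let H and L be linear subspaces of ℝⁿ, regarded as subsets of the additive topological group G = ℝⁿ. Then H ⋔ L in G if and only if H ∩ L = {0}. -/
open scoped Pointwise

/-- For linear subspaces `H`, `L` of the additive topological group `G = ℝⁿ`:
`H ⋔ L` in `G` (i.e. `H ∩ (S + L + S)` is relatively compact for every compact `S ⊆ G`)
if and only if `H ∩ L = {0}`. -/
theorem subspace_properPair_iff_inter_trivial (n : ℕ) (H L : Submodule ℝ (Fin n → ℝ)) :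
    (∀ S : Set (Fin n → ℝ), IsCompact S →
        IsCompact (closure ((H : Set (Fin n → ℝ)) ∩ (S + (L : Set (Fin n → ℝ)) + S)))) ↔
      (H : Set (Fin n → ℝ)) ∩ (L : Set (Fin n → ℝ)) = {0} := by
  constructor
  · intro hyp
    have h0 : ({0} : Set (Fin n → ℝ)) + (L : Set (Fin n → ℝ)) + {0} = (L : Set (Fin n → ℝ)) := by
      simp [Set.singleton_add, Set.add_singleton]
    have hc := hyp {0} isCompact_singleton
    rw [h0] at hc
    apply Set.eq_singleton_iff_unique_mem.2
    refine ⟨⟨H.zero_mem, L.zero_mem⟩, ?_⟩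
    intro x hx
    by_contra hne
    obtain ⟨r, hr⟩ := isBounded_iff_forall_norm_le.1 hc.isBounded
    have hxn : (0 : ℝ) < ‖x‖ := norm_pos_iff.2 hne
    set t : ℝ := (|r| + 1) / ‖x‖ with ht
    have htx : t • x ∈ closure ((H : Set (Fin n → ℝ)) ∩ (L : Set (Fin n → ℝ))) :=
      subset_closure ⟨H.smul_mem t hx.1, L.smul_mem t hx.2⟩
    have hle := hr _ htx
    have ht0 : 0 ≤ t := by positivity
    have : ‖t • x‖ = |r| + 1 := by
      rw [norm_smul, Real.norm_eq_abs, abs_of_nonneg ht0, ht,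
        div_mul_cancel₀ _ (ne_of_gt hxn)]
    rw [this] at hle
    have : r ≤ |r| := le_abs_self r
    linarith
  · intro htriv S hS
    set f : (↥H × ↥L) →ₗ[ℝ] (Fin n → ℝ) :=
      (H.subtype.comp (LinearMap.fst ℝ ↥H ↥L)) - (L.subtype.comp (LinearMap.snd ℝ ↥H ↥L)) with hf
    have hker : LinearMap.ker f = ⊥ := by
      rw [LinearMap.ker_eq_bot]
      intro ⟨h₁, l₁⟩ ⟨h₂, l₂⟩ heq
      have heq' : (h₁ : Fin n → ℝ) - l₁ = (h₂ : Fin n → ℝ) - l₂ := heq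
      have hmem : ((h₁ : Fin n → ℝ) - h₂) ∈ (H : Set (Fin n → ℝ)) ∩ (L : Set (Fin n → ℝ)) := by
        refine ⟨H.sub_mem h₁.2 h₂.2, ?_⟩
        have : (h₁ : Fin n → ℝ) - h₂ = (l₁ : Fin n → ℝ) - l₂ := by
          linear_combination heq'
        rw [this]
        exact L.sub_mem l₁.2 l₂.2
      rw [htriv, Set.mem_singleton_iff, sub_eq_zero] at hmem
      have hh : h₁ = h₂ := Subtype.ext hmem
      have hl : l₁ = l₂ := by
        apply Subtype.ext
        linear_combination hmem - heq'
      simp [hh, hl]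
    obtain ⟨K, hK0, hK⟩ := f.exists_antilipschitzWith hker
    obtain ⟨R, hR⟩ := isBounded_iff_forall_norm_le.1 hS.isBounded
    apply Bornology.IsBounded.isCompact_closure
    rw [isBounded_iff_forall_norm_le]
    refine ⟨K * (2 * R), ?_⟩
    rintro x ⟨hxH, hxS⟩
    obtain ⟨y, hy, s₂, hs₂, rfl⟩ := hxS
    obtain ⟨s₁, hs₁, l, hl, rfl⟩ := hy
    set p : ↥H × ↥L := (⟨s₁ + l + s₂, hxH⟩, ⟨l, hl⟩) with hp
    have hfp : f p = s₁ + s₂ := by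
      show (s₁ + l + s₂) - l = s₁ + s₂
      abel
    have h1 : ‖p‖ ≤ K * ‖f p‖ := by
      have := hK.le_mul_dist p 0
      simpa [dist_eq_norm, map_zero] using this
    have h2 : ‖s₁ + l + s₂‖ ≤ ‖p‖ := by
      have : ‖p.1‖ ≤ ‖p‖ := norm_fst_le p
      simpa using this
    have h3 : ‖f p‖ ≤ 2 * R := by
      rw [hfp]
      calc ‖s₁ + s₂‖ ≤ ‖s₁‖ + ‖s₂‖ := norm_add_le _ _
        _ ≤ R + R := add_le_add (hR _ hs₁) (hR _ hs₂)
        _ = 2 * R := by ring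
    calc ‖s₁ + l + s₂‖ ≤ ‖p‖ := h2
      _ ≤ K * ‖f p‖ := h1
      _ ≤ K * (2 * R) := by
          exact mul_le_mul_of_nonneg_left h3 (by positivity)
end

section
/- Let H and L be linear subspaces of ℝⁿ, regarded as subsets of the additive topological group G = ℝⁿ. Then H ∼ L in G if and only if H = L. -/
open scoped Pointwise

lemma subspace_sub_key (n : ℕ) (S : Set (Fin n → ℝ)) (hS : IsCompact S)
    (A B : Submodule ℝ (Fin n → ℝ))
    (hsub : (A : Set (Fin n → ℝ)) ⊆ S + (B : Set (Fin n → ℝ)) + S) : A ≤ B := by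
  intro x hx
  have hcl : IsClosed (B : Set (Fin n → ℝ)) := Submodule.closed_of_finiteDimensional B
  have : x ∈ closure (B : Set (Fin n → ℝ)) := by
    rw [Metric.mem_closure_iff]
    intro ε hε
    obtain ⟨C, hC⟩ := hS.isBounded.exists_norm_le
    set C' : ℝ := max C 0 with hC'
    have hC'0 : 0 ≤ C' := le_max_right _ _
    have hCle : ∀ y ∈ S, ‖y‖ ≤ C' := fun y hy => (hC y hy).trans (le_max_left _ _)
    obtain ⟨k, hk⟩ := exists_nat_gt ((2 * C' + 1) / ε)
    have hkpos : (0 : ℝ) < k := lt_of_le_of_lt (div_nonneg (by linarith) hε.le) hk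
    have hmem : (k : ℝ) • x ∈ (A : Set (Fin n → ℝ)) := A.smul_mem _ hx
    obtain ⟨u, hu, s2, hs2, huv⟩ := hsub hmem
    obtain ⟨s1, hs1, b, hb, hub⟩ := hu
    refine ⟨(k : ℝ)⁻¹ • b, B.smul_mem _ hb, ?_⟩
    have hxeq : x - (k : ℝ)⁻¹ • b = (k : ℝ)⁻¹ • (s1 + s2) := by
      simp only [] at huv hub
      have : (k : ℝ) • x = s1 + b + s2 := by rw [← huv, hub]
      have hx' : x = (k : ℝ)⁻¹ • ((k : ℝ) • x) := by
        rw [smul_smul, inv_mul_cancel₀ (ne_of_gt hkpos), one_smul]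
      rw [hx', this]
      rw [← smul_sub]
      congr 1
      abel
    rw [dist_eq_norm, hxeq, norm_smul]
    have hnorm : ‖s1 + s2‖ ≤ 2 * C' := by
      calc ‖s1 + s2‖ ≤ ‖s1‖ + ‖s2‖ := norm_add_le _ _
        _ ≤ C' + C' := add_le_add (hCle _ hs1) (hCle _ hs2)
        _ = 2 * C' := by ring
    have : ‖((k : ℝ)⁻¹)‖ * ‖s1 + s2‖ ≤ (k : ℝ)⁻¹ * (2 * C') := by
      rw [norm_inv, Real.norm_natCast]
      exact mul_le_mul_of_nonneg_left hnorm (inv_nonneg.mpr hkpos.le)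
    refine lt_of_le_of_lt this ?_
    rw [inv_mul_lt_iff₀ hkpos]
    rw [div_lt_iff₀ hε] at hk
    nlinarith
  rwa [hcl.closure_eq] at this

/-- For linear subspaces `H`, `L` of the additive topological group `G = ℝⁿ`:
`H ∼ L` in `G` (i.e. there is a compact `S ⊆ G` with `H ⊆ S + L + S` and `L ⊆ S + H + S`)
if and only if `H = L`. -/
theorem subspace_simPair_iff_eq (n : ℕ) (H L : Submodule ℝ (Fin n → ℝ)) :
    (∃ S : Set (Fin n → ℝ), IsCompact S ∧
        (H : Set (Fin n → ℝ)) ⊆ S + (L : Set (Fin n → ℝ)) + S ∧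
        (L : Set (Fin n → ℝ)) ⊆ S + (H : Set (Fin n → ℝ)) + S) ↔
      H = L := by
  constructor
  · rintro ⟨S, hS, hHL, hLH⟩
    exact le_antisymm (subspace_sub_key n S hS H L hHL) (subspace_sub_key n S hS L H hLH)
  · rintro rfl
    refine ⟨{0}, isCompact_singleton, ?_, ?_⟩ <;>
      · intro x hx
        exact ⟨0 + x, ⟨0, rfl, x, hx, rfl⟩, 0, rfl, by simp⟩
end

section
/- Let G be a locally compact Hausdorff topological group and let L and H be closed subgroups of G. Then L ⋔ H in G if and only if the action of L by left translations on the coset space G/H is proper, i.e. for every compact subset C of G/H the set {l ∈ L : l·C ∩ C ≠ ∅} has compact closure in L. -/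
open scoped Pointwise

/-- Compact sets lift along open continuous surjections from weakly locally compact spaces. -/
lemma exists_isCompact_superset_image {X Y : Type*} [TopologicalSpace X] [TopologicalSpace Y]
    [WeaklyLocallyCompactSpace X] {f : X → Y} (hf : IsOpenMap f) (hc : Continuous f)
    (hsurj : Function.Surjective f) {C : Set Y} (hC : IsCompact C) :
    ∃ S : Set X, IsCompact S ∧ C ⊆ f '' S := by
  have key : ∀ y : Y, ∃ K : Set X, IsCompact K ∧ f '' K ∈ nhds y := by
    intro y
    obtain ⟨x, rfl⟩ := hsurj y
    obtain ⟨K, hK, hKx⟩ := exists_compact_mem_nhds x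
    exact ⟨K, hK, hf.image_mem_nhds hKx⟩
  choose K hK hKn using key
  obtain ⟨t, ht⟩ := hC.elim_nhds_subcover (fun y => f '' K y) (fun y _ => hKn y)
  refine ⟨⋃ y ∈ t, K y, t.isCompact_biUnion (fun y _ => hK y), ht.2.trans ?_⟩
  rw [Set.image_iUnion₂]

/-- The pair `(L, H)` of subsets of a topological group `G` is proper, `L ⋔ H` in `G`:
for every compact subset `S` of `G`, the set `L ∩ (S·H·S)` is relatively compact. -/
def ProperPair {G : Type*} [Group G] [TopologicalSpace G] (L H : Set G) : Prop :=
  ∀ S : Set G, IsCompact S → IsCompact (closure (L ∩ (S * H * S)))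

/-- Let `G` be a locally compact Hausdorff topological group and `L`, `H` closed subgroups.
Then `L ⋔ H` in `G` if and only if `L` acts properly on the coset space `G/H` by left
translations, i.e. for every compact `C ⊆ G/H` the set `{l ∈ L | l·C ∩ C ≠ ∅}` has compact
closure in `L`. -/
theorem properPair_iff_proper_action_on_quotient
    {G : Type*} [Group G] [TopologicalSpace G] [IsTopologicalGroup G] [T2Space G]
    [LocallyCompactSpace G] (L H : Subgroup G)
    (hL : IsClosed (L : Set G)) (hH : IsClosed (H : Set G)) :
    ProperPair (L : Set G) (H : Set G) ↔
      ∀ C : Set (G ⧸ H), IsCompact C →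
        IsCompact (closure {l : L | ∃ c ∈ C, (l : G) • c ∈ C}) := by
  have hE : Topology.IsClosedEmbedding ((↑) : L → G) := hL.isClosedEmbedding_subtypeVal
  have hπo : IsOpenMap (QuotientGroup.mk : G → G ⧸ H) := QuotientGroup.isOpenMap_coe
  have hπc : Continuous (QuotientGroup.mk : G → G ⧸ H) := continuous_quotient_mk'
  constructor
  · intro hP C hC
    obtain ⟨S, hS, hCS⟩ :=
      exists_isCompact_superset_image hπo hπc (QuotientGroup.mk_surjective) hC
    set S' : Set G := S ∪ S⁻¹ with hS'def
    have hS' : IsCompact S' := hS.union hS.inv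
    have hsub : (Subtype.val '' {l : L | ∃ c ∈ C, (l : G) • c ∈ C}) ⊆
        (L : Set G) ∩ (S' * ↑H * S') := by
      rintro _ ⟨l, ⟨c, hcC, hlcC⟩, rfl⟩
      refine ⟨l.2, ?_⟩
      obtain ⟨g, hgS, rfl⟩ := hCS hcC
      have hlc : (l : G) • (QuotientGroup.mk g : G ⧸ H) = QuotientGroup.mk ((l : G) * g) :=
        MulAction.Quotient.smul_mk H (l : G) g
      rw [hlc] at hlcC
      obtain ⟨s, hsS, hs⟩ := hCS hlcC
      have hmem : s⁻¹ * ((l : G) * g) ∈ H := by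
        rwa [QuotientGroup.eq] at hs
      have : (l : G) = s * (s⁻¹ * ((l : G) * g)) * g⁻¹ := by group
      rw [this]
      exact Set.mul_mem_mul (Set.mul_mem_mul (Or.inl hsS) hmem) (Or.inr (Set.inv_mem_inv.2 hgS))
    have hcomp : IsCompact (closure (Subtype.val '' {l : L | ∃ c ∈ C, (l : G) • c ∈ C})) :=
      (hP S' hS').of_isClosed_subset isClosed_closure (closure_mono hsub)
    rw [hE.closure_image_eq] at hcomp
    exact hE.isEmbedding.isCompact_iff.mpr hcomp
  · intro hA S hS
    set S' : Set G := S ∪ S⁻¹ with hS'def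
    have hS' : IsCompact S' := hS.union hS.inv
    set C : Set (G ⧸ H) := QuotientGroup.mk '' S' with hCdef
    have hC : IsCompact C := hS'.image hπc
    have hsub : (L : Set G) ∩ (S * ↑H * S) ⊆
        Subtype.val '' {l : L | ∃ c ∈ C, (l : G) • c ∈ C} := by
      rintro x ⟨hxL, hx⟩
      obtain ⟨a, ⟨s₁, hs₁, h, hh, rfl⟩, s₂, hs₂, rfl⟩ := hx
      refine ⟨⟨s₁ * h * s₂, hxL⟩, ⟨QuotientGroup.mk s₂⁻¹, ?_, ?_⟩, rfl⟩
      · exact ⟨s₂⁻¹, Or.inr (Set.inv_mem_inv.2 hs₂), rfl⟩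
      · have : (s₁ * h * s₂ : G) • (QuotientGroup.mk s₂⁻¹ : G ⧸ H) = QuotientGroup.mk s₁ := by
          rw [MulAction.Quotient.smul_mk]
          show QuotientGroup.mk (s₁ * h * s₂ * s₂⁻¹) = _
          rw [mul_inv_cancel_right]
          exact QuotientGroup.mk_mul_of_mem s₁ hh
        rw [this]
        exact ⟨s₁, Or.inl hs₁, rfl⟩
    have hT : IsCompact (closure {l : L | ∃ c ∈ C, (l : G) • c ∈ C}) := hA C hC
    have himg : IsCompact (Subtype.val '' closure {l : L | ∃ c ∈ C, (l : G) • c ∈ C}) :=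
      hT.image continuous_subtype_val
    refine himg.of_isClosed_subset isClosed_closure ?_
    rw [← hE.closure_image_eq]
    exact closure_mono hsub
end

section
/- Let G be a Hausdorff topological group and let L and H be subsets of G. Then L ⋔ H in G if and only if H ⋔ L in G. -/
open scoped Pointwise

lemma properPair_of {G : Type*} [Group G] [TopologicalSpace G] [IsTopologicalGroup G]
    [T2Space G] (L H : Set G) (hLH : ProperPair L H) : ProperPair H L := by
  intro S hS
  have hK : IsCompact (closure (L ∩ (S⁻¹ * H * S⁻¹))) := hLH S⁻¹ hS.inv
  set K := closure (L ∩ (S⁻¹ * H * S⁻¹)) with hKdef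
  have hSKS : IsCompact (S * K * S) := (hS.mul hK).mul hS
  refine hSKS.of_isClosed_subset isClosed_closure
    (closure_minimal ?_ hSKS.isClosed)
  rintro x ⟨hxH, y, hy, s₂, hs₂, rfl⟩
  obtain ⟨s₁, hs₁, l, hl, rfl⟩ := hy
  have hm : s₁⁻¹ * (s₁ * l * s₂) * s₂⁻¹ ∈ S⁻¹ * H * S⁻¹ := Set.mul_mem_mul
    (Set.mul_mem_mul (Set.inv_mem_inv.mpr hs₁) hxH) (Set.inv_mem_inv.mpr hs₂)
  have heq : s₁⁻¹ * (s₁ * l * s₂) * s₂⁻¹ = l := by group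
  rw [heq] at hm
  have hlK : l ∈ K := subset_closure ⟨hl, hm⟩
  exact ⟨s₁ * l, ⟨s₁, hs₁, l, hlK, rfl⟩, s₂, hs₂, rfl⟩

/-- For subsets `L`, `H` of a Hausdorff topological group `G`: `L ⋔ H ↔ H ⋔ L`. -/
theorem properPair_symm {G : Type*} [Group G] [TopologicalSpace G] [IsTopologicalGroup G]
    [T2Space G] (L H : Set G) :
    ProperPair L H ↔ ProperPair H L :=
  ⟨properPair_of L H, properPair_of H L⟩
end
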